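/- Let G be a finite simple graph on vertex set V with edge-weight function w assigning to each edge a nonnegative real number, let W ⊆ V, and let B = {b ∈ W : b has a neighbor of G outside W} be the border vertices of W. Define the graph H on the vertex set (V \ W) ∪ B as follows: two vertices x, y of H with not both x, y in B are adjacent in H iff they are adjacent in G, with weight w({x,y}); two distinct vertices x, y ∈ B are adjacent in H iff they are joined by a walk of G lying entirely inside W, and then the H-weight of {x,y} is the weighted distance between x and y in the induced subgraph G[W]. Then for all x, y ∈ (V \ W) ∪ B, the weighted distance between x and y in H equals the weighted distance between x and y in G. -/

import Mathlib

/-- The weight of a walk: the sum of the weights of its edges. -/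
def walkWeight {V : Type*} {G : SimpleGraph V} (w : V → V → NNReal) :
    ∀ {x y : V}, G.Walk x y → NNReal :=
  fun p => (p.darts.map (fun d => w d.fst d.snd)).sum

/-- The weighted distance between two vertices: the infimum in `ℝ≥0∞` of the
weights of all walks between them (`∞` if there is no such walk). -/
noncomputable def wdist {V : Type*} (G : SimpleGraph V) (w : V → V → NNReal) (x y : V) :
    ENNReal :=
  ⨅ (p : G.Walk x y), (walkWeight w p : ENNReal)

/-- The border vertices of `W`: vertices of `W` having a neighbor outside `W`. -/
def borderSet {V : Type*} (G : SimpleGraph V) (W : Set V) : Set V :=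
  {b | b ∈ W ∧ ∃ y, y ∉ W ∧ G.Adj b y}

/-!
Both inequalities come from one principle: a potential `F` on the vertices with
`F u ≤ w u v + F v` along every edge satisfies `F x ≤ wdist G w x y + F y`.
Every edge of `H` is realized in `G` at no more than its weight, which gives `wdist G ≤ wdist H`.
Conversely, `wdist H wH · y`, extended into the interior of `W` by the cheapest walk inside `W`
to a border vertex, is such a potential for `G`: an edge inside `W` only lengthens that walk,
and an edge leaving `W` is an edge of `H`.
-/

open SimpleGraph

namespace SimpleGraph

variable {V V' : Type*} {G : SimpleGraph V} {G' : SimpleGraph V'} {w : V → V → NNReal}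

@[simp]
lemma walkWeight_nil (x : V) : walkWeight w (Walk.nil : G.Walk x x) = 0 := rfl

@[simp]
lemma walkWeight_cons {x y z : V} (h : G.Adj x y) (p : G.Walk y z) :
    walkWeight w (Walk.cons h p) = w x y + walkWeight w p := by
  simp [walkWeight]

lemma wdist_le_walkWeight {x y : V} (p : G.Walk x y) : wdist G w x y ≤ walkWeight w p :=
  iInf_le _ p

@[simp]
lemma wdist_self (x : V) : wdist G w x x = 0 :=
  nonpos_iff_eq_zero.mp (by simpa using wdist_le_walkWeight (w := w) (Walk.nil : G.Walk x x))

lemma wdist_eq_top_of_not_reachable {x y : V} (h : ¬G.Reachable x y) : wdist G w x y = ⊤ :=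
  haveI : IsEmpty (G.Walk x y) := not_nonempty_iff.mp h
  iInf_of_empty _

lemma wdist_le_add_of_adj {x v : V} (h : G.Adj x v) (y : V) :
    wdist G w x y ≤ w x v + wdist G w v y := by
  rw [wdist, wdist, ENNReal.add_iInf]
  refine le_iInf fun p => (wdist_le_walkWeight (Walk.cons h p)).trans_eq ?_
  simp

lemma wdist_le_of_adj {x y : V} (h : G.Adj x y) : wdist G w x y ≤ w x y := by
  simpa using wdist_le_add_of_adj (w := w) h y

lemma le_wdist_add_of_forall_adj {F : V → ENNReal}
    (hF : ∀ u v, G.Adj u v → F u ≤ w u v + F v) (x y : V) :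
    F x ≤ wdist G w x y + F y := by
  rw [wdist, ENNReal.iInf_add]
  refine le_iInf fun p => ?_
  induction p with
  | nil => simp
  | @cons u v z h q ih =>
    calc F u ≤ w u v + F v := hF u v h
      _ ≤ w u v + (walkWeight w q + F z) := by gcongr
      _ = walkWeight w (Walk.cons h q) + F z := by push_cast [walkWeight_cons]; ring

lemma wdist_triangle (x y z : V) : wdist G w x z ≤ wdist G w x y + wdist G w y z := by
  simpa using le_wdist_add_of_forall_adj (F := (wdist G w · z))
    (fun _ _ h => wdist_le_add_of_adj h z) x y

lemma wdist_le_wdist_of_forall_adj (f : V' → V) {w' : V' → V' → NNReal}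
    (hf : ∀ a b, G'.Adj a b → wdist G w (f a) (f b) ≤ w' a b) (x y : V') :
    wdist G w (f x) (f y) ≤ wdist G' w' x y := by
  simpa using le_wdist_add_of_forall_adj (F := fun a => wdist G w (f a) (f y))
    (fun a b h => (wdist_triangle _ (f b) _).trans (by gcongr; exact hf a b h)) x y

lemma wdist_le_wdist_induce {W : Set V} (x y : W) :
    wdist G w x y ≤ wdist (G.induce W) (fun a b => w a.val b.val) x y :=
  wdist_le_wdist_of_forall_adj Subtype.val (fun _ _ h => wdist_le_of_adj h) x y

end SimpleGraph

structure IsDenseDistanceGraph {V : Type*} (G : SimpleGraph V) (w : V → V → NNReal)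
    (W : Set V) (H : SimpleGraph ↥(Wᶜ ∪ borderSet G W))
    (wH : ↥(Wᶜ ∪ borderSet G W) → ↥(Wᶜ ∪ borderSet G W) → NNReal) : Prop where
  adj_iff_of_not_border : ∀ x y : ↥(Wᶜ ∪ borderSet G W),
    ¬ (x.val ∈ borderSet G W ∧ y.val ∈ borderSet G W) → (H.Adj x y ↔ G.Adj x.val y.val)
  adj_iff_reachable : ∀ (x y : ↥(Wᶜ ∪ borderSet G W))
    (hx : x.val ∈ borderSet G W) (hy : y.val ∈ borderSet G W), x ≠ y →
    (H.Adj x y ↔ (G.induce W).Reachable ⟨x.val, hx.1⟩ ⟨y.val, hy.1⟩)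
  weight_eq_of_not_border : ∀ x y : ↥(Wᶜ ∪ borderSet G W), H.Adj x y →
    ¬ (x.val ∈ borderSet G W ∧ y.val ∈ borderSet G W) → wH x y = w x.val y.val
  weight_eq_wdist : ∀ (x y : ↥(Wᶜ ∪ borderSet G W))
    (hx : x.val ∈ borderSet G W) (hy : y.val ∈ borderSet G W), H.Adj x y →
    (wH x y : ENNReal) =
      wdist (G.induce W) (fun a b => w a.val b.val) ⟨x.val, hx.1⟩ ⟨y.val, hy.1⟩

open Classical in
noncomputable def extendedWdist {V : Type*} (G : SimpleGraph V) (w : V → V → NNReal)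
    (W : Set V) (H : SimpleGraph ↥(Wᶜ ∪ borderSet G W))
    (wH : ↥(Wᶜ ∪ borderSet G W) → ↥(Wᶜ ∪ borderSet G W) → NNReal)
    (y : ↥(Wᶜ ∪ borderSet G W)) (v : V) : ENNReal :=
  if hv : v ∈ W then
    ⨅ b : borderSet G W, wdist (G.induce W) (fun a b => w a.val b.val) ⟨v, hv⟩ ⟨b, b.2.1⟩ +
      wdist H wH ⟨b, Or.inr b.2⟩ y
  else wdist H wH ⟨v, Or.inl hv⟩ y

namespace IsDenseDistanceGraph

variable {V : Type*} {G : SimpleGraph V} {w : V → V → NNReal} {W : Set V}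
  {H : SimpleGraph ↥(Wᶜ ∪ borderSet G W)}
  {wH : ↥(Wᶜ ∪ borderSet G W) → ↥(Wᶜ ∪ borderSet G W) → NNReal}

lemma wdist_val_le_weight (hH : IsDenseDistanceGraph G w W H wH) {x y : ↥(Wᶜ ∪ borderSet G W)}
    (h : H.Adj x y) : wdist G w x.val y.val ≤ wH x y := by
  by_cases hxy : x.val ∈ borderSet G W ∧ y.val ∈ borderSet G W
  · rw [hH.weight_eq_wdist x y hxy.1 hxy.2 h]
    exact wdist_le_wdist_induce _ _
  · rw [hH.weight_eq_of_not_border x y h hxy]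
    exact wdist_le_of_adj ((hH.adj_iff_of_not_border x y hxy).mp h)

lemma wdist_val_le_wdist (hH : IsDenseDistanceGraph G w W H wH) (x y : ↥(Wᶜ ∪ borderSet G W)) :
    wdist G w x.val y.val ≤ wdist H wH x y :=
  wdist_le_wdist_of_forall_adj Subtype.val (fun _ _ h => hH.wdist_val_le_weight h) x y

lemma wdist_le_wdist_induce (hH : IsDenseDistanceGraph G w W H wH)
    {x y : ↥(Wᶜ ∪ borderSet G W)} (hx : x.val ∈ borderSet G W) (hy : y.val ∈ borderSet G W) :
    wdist H wH x y ≤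
      wdist (G.induce W) (fun a b => w a.val b.val) ⟨x.val, hx.1⟩ ⟨y.val, hy.1⟩ := by
  obtain rfl | hne := eq_or_ne x y
  · simp
  by_cases hreach : (G.induce W).Reachable ⟨x.val, hx.1⟩ ⟨y.val, hy.1⟩
  · have hadj := (hH.adj_iff_reachable x y hx hy hne).mpr hreach
    exact (wdist_le_of_adj hadj).trans_eq (hH.weight_eq_wdist x y hx hy hadj)
  · simp [wdist_eq_top_of_not_reachable hreach]

lemma wdist_le_add_of_adj (hH : IsDenseDistanceGraph G w W H wH)
    {x v : ↥(Wᶜ ∪ borderSet G W)} (hxv : ¬ (x.val ∈ borderSet G W ∧ v.val ∈ borderSet G W))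
    (h : G.Adj x.val v.val) (y : ↥(Wᶜ ∪ borderSet G W)) :
    wdist H wH x y ≤ w x.val v.val + wdist H wH v y := by
  have hadj := (hH.adj_iff_of_not_border x v hxv).mpr h
  simpa [hH.weight_eq_of_not_border x v hadj hxv] using
    SimpleGraph.wdist_le_add_of_adj (w := wH) hadj y

lemma extendedWdist_eq (hH : IsDenseDistanceGraph G w W H wH) (x y : ↥(Wᶜ ∪ borderSet G W)) :
    extendedWdist G w W H wH y x = wdist H wH x y := by
  unfold extendedWdist
  split_ifs with hxW
  · have hx : x.val ∈ borderSet G W := x.2.resolve_left (· hxW)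
    refine le_antisymm ((iInf_le _ ⟨x, hx⟩).trans_eq (by simp)) (le_iInf fun b => ?_)
    exact (wdist_triangle _ _ _).trans (by gcongr; exact hH.wdist_le_wdist_induce hx b.2)
  · rfl

lemma extendedWdist_le_add_of_adj (hH : IsDenseDistanceGraph G w W H wH)
    (y : ↥(Wᶜ ∪ borderSet G W)) {u v : V} (h : G.Adj u v) :
    extendedWdist G w W H wH y u ≤ w u v + extendedWdist G w W H wH y v := by
  by_cases hW : u ∈ W ∧ v ∈ W
  · have hadj : (G.induce W).Adj ⟨u, hW.1⟩ ⟨v, hW.2⟩ := h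
    simp only [extendedWdist, dif_pos hW.1, dif_pos hW.2, ENNReal.add_iInf, ← add_assoc]
    gcongr with b
    exact SimpleGraph.wdist_le_add_of_adj hadj _
  have hu : u ∈ Wᶜ ∪ borderSet G W := by
    by_cases huW : u ∈ W
    · exact Or.inr ⟨huW, v, fun hvW => hW ⟨huW, hvW⟩, h⟩
    · exact Or.inl huW
  have hv : v ∈ Wᶜ ∪ borderSet G W := by
    by_cases hvW : v ∈ W
    · exact Or.inr ⟨hvW, u, fun huW => hW ⟨huW, hvW⟩, h.symm⟩
    · exact Or.inl hvW
  rw [hH.extendedWdist_eq ⟨u, hu⟩, hH.extendedWdist_eq ⟨v, hv⟩]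
  exact hH.wdist_le_add_of_adj (fun hb => hW ⟨hb.1.1, hb.2.1⟩) h y

lemma wdist_eq_wdist (hH : IsDenseDistanceGraph G w W H wH) (x y : ↥(Wᶜ ∪ borderSet G W)) :
    wdist H wH x y = wdist G w x.val y.val := by
  refine le_antisymm ?_ (hH.wdist_val_le_wdist x y)
  simpa [hH.extendedWdist_eq] using
    le_wdist_add_of_forall_adj (F := extendedWdist G w W H wH y)
      (fun _ _ h => hH.extendedWdist_le_add_of_adj y h) x.val y.val

end IsDenseDistanceGraph

theorem wdist_dense_distance_graph_general {V : Type*}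
    (G : SimpleGraph V) (w : V → V → NNReal)
    (W : Set V)
    (H : SimpleGraph ↥(Wᶜ ∪ borderSet G W))
    (wH : ↥(Wᶜ ∪ borderSet G W) → ↥(Wᶜ ∪ borderSet G W) → NNReal)
    (hadj₁ : ∀ x y : ↥(Wᶜ ∪ borderSet G W),
      ¬ (x.val ∈ borderSet G W ∧ y.val ∈ borderSet G W) →
      (H.Adj x y ↔ G.Adj x.val y.val))
    (hadj₂ : ∀ (x y : ↥(Wᶜ ∪ borderSet G W))
      (hx : x.val ∈ borderSet G W) (hy : y.val ∈ borderSet G W), x ≠ y →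
      (H.Adj x y ↔ (G.induce W).Reachable ⟨x.val, hx.1⟩ ⟨y.val, hy.1⟩))
    (hwH₁ : ∀ x y : ↥(Wᶜ ∪ borderSet G W), H.Adj x y →
      ¬ (x.val ∈ borderSet G W ∧ y.val ∈ borderSet G W) → wH x y = w x.val y.val)
    (hwH₂ : ∀ (x y : ↥(Wᶜ ∪ borderSet G W))
      (hx : x.val ∈ borderSet G W) (hy : y.val ∈ borderSet G W), H.Adj x y →
      (wH x y : ENNReal) =
        wdist (G.induce W) (fun a b => w a.val b.val) ⟨x.val, hx.1⟩ ⟨y.val, hy.1⟩) :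
    ∀ x y : ↥(Wᶜ ∪ borderSet G W), wdist H wH x y = wdist G w x.val y.val :=
  IsDenseDistanceGraph.wdist_eq_wdist ⟨hadj₁, hadj₂, hwH₁, hwH₂⟩

/-- Replacing a cluster `W` by the dense distance graph on its border vertices
(border vertices joined iff connected inside `W`, weighted by the shortest-path
distance in the induced subgraph `G[W]`) preserves all weighted distances among
the remaining vertices. -/
theorem wdist_dense_distance_graph {V : Type*} [Fintype V]
    (G : SimpleGraph V) (w : V → V → NNReal) (hw : ∀ x y, w x y = w y x)
    (W : Set V)
    (H : SimpleGraph ↥(Wᶜ ∪ borderSet G W))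
    (wH : ↥(Wᶜ ∪ borderSet G W) → ↥(Wᶜ ∪ borderSet G W) → NNReal)
    (hwHsymm : ∀ x y, wH x y = wH y x)
    (hadj₁ : ∀ x y : ↥(Wᶜ ∪ borderSet G W),
      ¬ (x.val ∈ borderSet G W ∧ y.val ∈ borderSet G W) →
      (H.Adj x y ↔ G.Adj x.val y.val))
    (hadj₂ : ∀ (x y : ↥(Wᶜ ∪ borderSet G W))
      (hx : x.val ∈ borderSet G W) (hy : y.val ∈ borderSet G W), x ≠ y →
      (H.Adj x y ↔ (G.induce W).Reachable ⟨x.val, hx.1⟩ ⟨y.val, hy.1⟩))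
    (hwH₁ : ∀ x y : ↥(Wᶜ ∪ borderSet G W), H.Adj x y →
      ¬ (x.val ∈ borderSet G W ∧ y.val ∈ borderSet G W) → wH x y = w x.val y.val)
    (hwH₂ : ∀ (x y : ↥(Wᶜ ∪ borderSet G W))
      (hx : x.val ∈ borderSet G W) (hy : y.val ∈ borderSet G W), H.Adj x y →
      (wH x y : ENNReal) =
        wdist (G.induce W) (fun a b => w a.val b.val) ⟨x.val, hx.1⟩ ⟨y.val, hy.1⟩) :
    ∀ x y : ↥(Wᶜ ∪ borderSet G W), wdist H wH x y = wdist G w x.val y.val :=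
  wdist_dense_distance_graph_general G w W H wH hadj₁ hadj₂ hwH₁ hwH₂
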